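/- For every γ̄ > 0 and all real numbers 0 ≤ g_l ≤ g_u, the integral ∫_{g_l}^{g_u} ln(1 + γ̄ g) e^{−g} dg equals e^{−g_l} ln(1 + γ̄ g_l) − e^{−g_u} ln(1 + γ̄ g_u) + e^{1/γ̄} · (E₁(1/γ̄ + g_l) − E₁(1/γ̄ + g_u)). -/

import Mathlib

/-!
Integrating by parts against `e^{-g}` turns `log (1 + γ g)` into its derivative
`γ / (1 + γ g) = 1 / (g + 1/γ)`, and the shift `t = g + 1/γ` turns `e^{-g} / (g + 1/γ)` into
`e^{1/γ} e^{-t} / t`, whose integral over `[1/γ + g_l, 1/γ + g_u]` is `E₁(1/γ + g_l) - E₁(1/γ + g_u)`.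
-/

open MeasureTheory Real

/-- The exponential integral function `E₁(z) = ∫_z^∞ e^{−t}/t dt`. -/
noncomputable def expInt (z : ℝ) : ℝ := ∫ t in Set.Ioi z, Real.exp (-t) / t

lemma integrableOn_exp_neg_div_Ioi {a : ℝ} (ha : 0 < a) :
    IntegrableOn (fun t => exp (-t) / t) (Set.Ioi a) := by
  refine ((integrableOn_exp_neg_Ioi a).div_const a).mono' ?_ ?_
  · exact ((continuous_exp.comp continuous_neg).continuousOn.div continuousOn_id
      fun t ht => (ha.trans ht).ne').aestronglyMeasurable measurableSet_Ioi
  · filter_upwards [ae_restrict_mem measurableSet_Ioi] with t ht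
    rw [norm_of_nonneg (div_nonneg (exp_pos _).le (ha.trans ht).le)]
    exact div_le_div_of_nonneg_left (exp_pos _).le ha ht.le

lemma expInt_sub_expInt {a b : ℝ} (ha : 0 < a) (hb : 0 < b) :
    expInt a - expInt b = ∫ t in a..b, exp (-t) / t :=
  intervalIntegral.integral_Ioi_sub_Ioi' (integrableOn_exp_neg_div_Ioi ha)
    (integrableOn_exp_neg_div_Ioi hb)

lemma integral_exp_neg_div_add (a b c : ℝ) :
    ∫ g in a..b, exp (-g) / (g + c) = exp c * ∫ t in a + c..b + c, exp (-t) / t := by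
  rw [← intervalIntegral.integral_comp_add_right, ← intervalIntegral.integral_const_mul]
  congr 1 with g
  rw [mul_div_assoc', ← exp_add]
  ring_nf

lemma integral_mul_exp_neg_eq_sub_add {f f' : ℝ → ℝ} {a b : ℝ}
    (hf : ∀ x ∈ Set.uIcc a b, HasDerivAt f (f' x) x) (hf' : IntervalIntegrable f' volume a b) :
    ∫ g in a..b, f g * exp (-g)
      = exp (-a) * f a - exp (-b) * f b + ∫ g in a..b, f' g * exp (-g) := by
  have hv : ∀ x ∈ Set.uIcc a b, HasDerivAt (fun x => -exp (-x)) (exp (-x)) x := fun x _ => by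
    simpa using ((hasDerivAt_neg x).exp).fun_neg
  have hv' : IntervalIntegrable (fun x => exp (-x)) volume a b := by
    apply Continuous.intervalIntegrable
    fun_prop
  rw [intervalIntegral.integral_mul_deriv_eq_deriv_mul hf hv hf' hv']
  simp only [mul_neg, intervalIntegral.integral_neg]
  ring

lemma hasDerivAt_log_one_add_mul {γ x : ℝ} (hγ : γ ≠ 0) (hx : x + γ⁻¹ ≠ 0) :
    HasDerivAt (fun x => log (1 + γ * x)) (x + γ⁻¹)⁻¹ x := by
  have h1 : 1 + γ * x ≠ 0 := by
    rw [show 1 + γ * x = γ * (x + γ⁻¹) by field_simp; ring]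
    exact mul_ne_zero hγ hx
  convert (((hasDerivAt_id' x).const_mul γ).const_add 1).log h1 using 1
  field_simp
  ring

/-- Closed-form ergodic throughput (in nats) of the PHAT-PIP scheme (Theorem 3). -/
theorem phat_pip_ergodic_throughput (γ : ℝ) (hγ : 0 < γ) (gl gu : ℝ)
    (hgl : 0 ≤ gl) (hglu : gl ≤ gu) :
    ∫ g in gl..gu, Real.log (1 + γ * g) * Real.exp (-g)
      = Real.exp (-gl) * Real.log (1 + γ * gl) - Real.exp (-gu) * Real.log (1 + γ * gu)
        + Real.exp (1 / γ) * (expInt (1 / γ + gl) - expInt (1 / γ + gu)) := by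
  have hpos : ∀ x ∈ Set.uIcc gl gu, 0 < x + γ⁻¹ := fun x hx => by
    have : 0 ≤ x := hgl.trans (Set.uIcc_of_le hglu ▸ hx).1
    positivity
  have hderiv : ∀ x ∈ Set.uIcc gl gu, HasDerivAt (fun x => log (1 + γ * x)) (x + γ⁻¹)⁻¹ x :=
    fun x hx => hasDerivAt_log_one_add_mul hγ.ne' (hpos x hx).ne'
  have hint : IntervalIntegrable (fun x => (x + γ⁻¹)⁻¹) volume gl gu :=
    (continuousOn_id.add continuousOn_const).inv₀ (fun x hx => (hpos x hx).ne')
      |>.intervalIntegrable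
  rw [integral_mul_exp_neg_eq_sub_add hderiv hint]
  simp only [inv_mul_eq_div, integral_exp_neg_div_add, one_div]
  rw [expInt_sub_expInt (by positivity) (by linarith [hpos gu Set.right_mem_uIcc]), add_comm gl,
    add_comm gu]
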